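/- Assume φ3 and φ4 are four times continuously differentiable on [1/2,1] and satisfy condition (2). For t, s ∈ [1/2,1] let D(t,s) denote the determinant of the 4×4 matrix whose rows are (1, 2t, φ3'(t), φ4'(t)), (1, 2s, φ3'(s), φ4'(s)), (0, 2, φ3''(t), φ4''(t)) and (0, 2, φ3''(s), φ4''(s)). Then there exist constants c > 0 and C > 0, depending only on A2 and A3, such that c·(t−s)⁴ ≤ |D(t,s)| ≤ C·(t−s)⁴ for all t, s ∈ [1/2,1]. -/

import Mathlib

/-!
Write `γₖ = (φ₃⁽ᵏ⁾, φ₄⁽ᵏ⁾)` and `p ∧ q = p₁ q₂ - p₂ q₁`. Expanding the determinant gives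
`D(t,s) = -2 ((t - s) γ₂(t) ∧ γ₂(s) + (γ₁(t) - γ₁(s)) ∧ (γ₂(t) - γ₂(s)))`.
The kernel `K(x,y) = φ₃'''(x) φ₄''''(y) - φ₃''''(x) φ₄'''(y)` of condition (2) is continuous and
never vanishes on the connected square, so it has constant sign; swapping `φ₃` and `φ₄` we may
assume `A₂ ≤ K ≤ A₃`. Differentiating along an antidiagonal gives
`A₂ (y - x) ≤ γ₃(x) ∧ γ₃(y) ≤ A₃ (y - x)` for `x ≤ y`, and three more integrations, each a
comparison of derivatives on an interval, carry the pinching through polynomials of degree 2, 3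
and 4, ending with `(t - s)⁴ / 12` times `A₂` resp. `A₃` as bounds for the bracket above.
-/

open MeasureTheory Set

/-- The `n`-th derivative of `φ` on the interval `[1/2,1]`. -/
noncomputable def iDW (n : ℕ) (φ : ℝ → ℝ) (t : ℝ) : ℝ :=
  iteratedDerivWithin n φ (Icc (1/2 : ℝ) 1) t

/-- Condition (2): `A2 ≤ |φ₃'''(t)·φ₄''''(s) − φ₃''''(t)·φ₄'''(s)| ≤ A3` on `[1/2,1]²`. -/
def Cond2 (A2 A3 : ℝ) (φ3 φ4 : ℝ → ℝ) : Prop :=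
  ∀ t ∈ Icc (1/2 : ℝ) 1, ∀ s ∈ Icc (1/2 : ℝ) 1,
    A2 ≤ |iDW 3 φ3 t * iDW 4 φ4 s - iDW 4 φ3 t * iDW 3 φ4 s| ∧
      |iDW 3 φ3 t * iDW 4 φ4 s - iDW 4 φ3 t * iDW 3 φ4 s| ≤ A3

/-- The determinant `D(t,s)` of Lemma 18. -/
noncomputable def Dmat (φ3 φ4 : ℝ → ℝ) (t s : ℝ) : ℝ :=
  Matrix.det
    !![(1 : ℝ), 2 * t, iDW 1 φ3 t, iDW 1 φ4 t;
       (1 : ℝ), 2 * s, iDW 1 φ3 s, iDW 1 φ4 s;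
       (0 : ℝ), 2, iDW 2 φ3 t, iDW 2 φ4 t;
       (0 : ℝ), 2, iDW 2 φ3 s, iDW 2 φ4 s]

theorem sub_mem_Icc_of_hasDerivWithinAt {f p f' p' : ℝ → ℝ} {a b A B : ℝ} (hab : a ≤ b)
    (hf : ∀ x ∈ Icc a b, HasDerivWithinAt f (f' x) (Icc a b) x)
    (hp : ∀ x ∈ Icc a b, HasDerivWithinAt p (p' x) (Icc a b) x)
    (h : ∀ x ∈ Ioo a b, f' x ∈ Icc (A * p' x) (B * p' x)) :
    f b - f a ∈ Icc (A * (p b - p a)) (B * (p b - p a)) := by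
  have mono {g g' : ℝ → ℝ} (hg : ∀ x ∈ Icc a b, HasDerivWithinAt g (g' x) (Icc a b) x)
      (hg' : ∀ x ∈ Ioo a b, 0 ≤ g' x) : g a ≤ g b := by
    refine monotoneOn_of_hasDerivWithinAt_nonneg (convex_Icc a b)
      (fun x hx => (hg x hx).continuousWithinAt) (fun x hx => ?_) (by simpa using hg')
      (left_mem_Icc.2 hab) (right_mem_Icc.2 hab) hab
    exact (hg x (interior_subset hx)).mono interior_subset
  constructor
  · have := mono (g := fun x => f x - A * p x)
      (fun x hx => (hf x hx).sub ((hp x hx).const_mul A)) fun x hx => sub_nonneg.2 (h x hx).1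
    linarith
  · have := mono (g := fun x => B * p x - f x)
      (fun x hx => ((hp x hx).const_mul B).sub (hf x hx)) fun x hx => sub_nonneg.2 (h x hx).2
    linarith

def wedge (p q : ℝ × ℝ) : ℝ := p.1 * q.2 - p.2 * q.1

theorem wedge_self (p : ℝ × ℝ) : wedge p p = 0 := by
  rw [wedge, mul_comm, sub_self]

theorem HasDerivWithinAt.wedge {P Q : ℝ → ℝ × ℝ} {P' Q' : ℝ × ℝ} {s : Set ℝ} {x : ℝ}
    (hP : HasDerivWithinAt P P' s x) (hQ : HasDerivWithinAt Q Q' s x) :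
    HasDerivWithinAt (fun t => wedge (P t) (Q t)) (wedge P' (Q x) + wedge (P x) Q') s x := by
  have fst {R : ℝ → ℝ × ℝ} {R'} (h : HasDerivWithinAt R R' s x) :
      HasDerivWithinAt (fun t => (R t).1) R'.1 s x :=
    (ContinuousLinearMap.fst ℝ ℝ ℝ).hasFDerivAt.comp_hasDerivWithinAt x h
  have snd {R : ℝ → ℝ × ℝ} {R'} (h : HasDerivWithinAt R R' s x) :
      HasDerivWithinAt (fun t => (R t).2) R'.2 s x :=
    (ContinuousLinearMap.snd ℝ ℝ ℝ).hasFDerivAt.comp_hasDerivWithinAt x h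
  refine (((fst hP).mul (snd hQ)).sub ((snd hP).mul (fst hQ))).congr_deriv ?_
  unfold _root_.wedge; ring

section

variable {J : Set ℝ} [J.OrdConnected] {A B : ℝ}

theorem wedge_mem_Icc_linear {T T' : ℝ → ℝ × ℝ} (hT : ∀ x ∈ J, HasDerivWithinAt T (T' x) J x)
    (hK : ∀ x ∈ J, ∀ y ∈ J, (T x).1 * (T' y).2 - (T' x).1 * (T y).2 ∈ Icc A B)
    ⦃x y : ℝ⦄ (hx : x ∈ J) (hy : y ∈ J) (hxy : x ≤ y) :
    wedge (T x) (T y) ∈ Icc (A * (y - x)) (B * (y - x)) := by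
  have hJ : Icc ((x + y) / 2) y ⊆ J :=
    (Icc_subset_Icc_left (by linarith)).trans (J.Icc_subset hx hy)
  have hrefl : MapsTo (fun ρ => x + y - ρ) (Icc ((x + y) / 2) y) J := fun ρ hρ =>
    J.Icc_subset hx hy ⟨by linarith [hρ.2], by linarith [hρ.1]⟩
  -- reflecting about the midpoint turns the derivative into `K(x + y - ρ, ρ) + K(ρ, x + y - ρ)`
  have hf : ∀ ρ ∈ Icc ((x + y) / 2) y, HasDerivWithinAt (fun ρ => wedge (T (x + y - ρ)) (T ρ))
      (wedge ((-1 : ℝ) • T' (x + y - ρ)) (T ρ) + wedge (T (x + y - ρ)) (T' ρ))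
      (Icc ((x + y) / 2) y) ρ := fun ρ hρ => by
    have hrefl' : HasDerivWithinAt (fun ρ => x + y - ρ) (-1) (Icc ((x + y) / 2) y) ρ := by
      simpa using (hasDerivWithinAt_id ρ _).const_sub (x + y)
    exact ((hT _ (hrefl hρ)).scomp ρ hrefl' hrefl).wedge ((hT ρ (hJ hρ)).mono hJ)
  have key := sub_mem_Icc_of_hasDerivWithinAt (A := A) (B := B) (p := fun ρ => 2 * ρ)
    (by linarith : (x + y) / 2 ≤ y) hf
    (fun ρ _ => ((hasDerivAt_id ρ).const_mul 2).hasDerivWithinAt) fun ρ hρ => by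
      have hρ' := Ioo_subset_Icc_self hρ
      have h1 := hK _ (hrefl hρ') ρ (hJ hρ')
      have h2 := hK ρ (hJ hρ') _ (hrefl hρ')
      simp only [wedge, Prod.smul_fst, Prod.smul_snd, smul_eq_mul, mem_Icc] at h1 h2 ⊢
      constructor <;> linarith [h1.1, h1.2, h2.1, h2.2]
  rwa [show x + y - (x + y) / 2 = (x + y) / 2 by ring, add_sub_cancel_right, wedge_self, sub_zero,
    show 2 * y - 2 * ((x + y) / 2) = y - x by ring] at key

theorem wedge_sub_mem_Icc_quadratic {P T : ℝ → ℝ × ℝ}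
    (hP : ∀ x ∈ J, HasDerivWithinAt P (T x) J x)
    (hT : ∀ ⦃x y⦄, x ∈ J → y ∈ J → x ≤ y → wedge (T x) (T y) ∈ Icc (A * (y - x)) (B * (y - x)))
    ⦃x u y : ℝ⦄ (hx : x ∈ J) (hy : y ∈ J) (hxu : x ≤ u) (huy : u ≤ y) :
    wedge (P u - P x) (T y) ∈
      Icc (A * (((y - x) ^ 2 - (y - u) ^ 2) / 2)) (B * (((y - x) ^ 2 - (y - u) ^ 2) / 2)) := by
  have hsub : Icc x u ⊆ J := (Icc_subset_Icc_right huy).trans (J.Icc_subset hx hy)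
  have key := sub_mem_Icc_of_hasDerivWithinAt (A := A) (B := B) (f := fun w => wedge (P w) (T y))
    (p := fun w => -(y - w) ^ 2 / 2) (p' := fun w => y - w) hxu
    (fun w hw => ((hP w (hsub hw)).mono hsub).wedge (hasDerivWithinAt_const _ _ (T y)))
    (fun w _ => by
      refine ((((hasDerivAt_id w).const_sub y).pow 2).neg.div_const 2).hasDerivWithinAt
        |>.congr_deriv ?_
      simp only [Nat.cast_ofNat, id_eq, Nat.add_one_sub_one, pow_one]; ring)
    fun w hw => by
      simpa [wedge] using hT (hsub (Ioo_subset_Icc_self hw)) hy (hw.2.le.trans huy)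
  rw [show wedge (P u - P x) (T y) = wedge (P u) (T y) - wedge (P x) (T y) by
    simp only [wedge, Prod.fst_sub, Prod.snd_sub]; ring]
  convert key using 3 <;> ring

theorem wedge_sub_mem_Icc_cubic {P T : ℝ → ℝ × ℝ}
    (hP : ∀ x ∈ J, HasDerivWithinAt P (T x) J x)
    (hPT : ∀ ⦃x u y⦄, x ∈ J → y ∈ J → x ≤ u → u ≤ y → wedge (P u - P x) (T y) ∈
      Icc (A * (((y - x) ^ 2 - (y - u) ^ 2) / 2)) (B * (((y - x) ^ 2 - (y - u) ^ 2) / 2)))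
    ⦃x u y : ℝ⦄ (hx : x ∈ J) (hy : y ∈ J) (hxu : x ≤ u) (huy : u ≤ y) :
    wedge (P u - P x) (P y - P u) ∈
      Icc (A * (((y - x) ^ 3 - (y - u) ^ 3 - (u - x) ^ 3) / 6))
        (B * (((y - x) ^ 3 - (y - u) ^ 3 - (u - x) ^ 3) / 6)) := by
  have hsub : Icc u y ⊆ J := (Icc_subset_Icc_left hxu).trans (J.Icc_subset hx hy)
  have key := sub_mem_Icc_of_hasDerivWithinAt (A := A) (B := B)
    (f := fun w => wedge (P u - P x) (P w)) (p := fun w => ((w - x) ^ 3 - (w - u) ^ 3) / 6)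
    (p' := fun w => ((w - x) ^ 2 - (w - u) ^ 2) / 2) huy
    (fun w hw => (hasDerivWithinAt_const _ _ (P u - P x)).wedge ((hP w (hsub hw)).mono hsub))
    (fun w _ => by
      refine (((((hasDerivAt_id w).sub_const x).pow 3).sub
        (((hasDerivAt_id w).sub_const u).pow 3)).div_const 6).hasDerivWithinAt.congr_deriv ?_
      simp only [Nat.cast_ofNat, id_eq, Nat.add_one_sub_one]; ring)
    fun w hw => by
      simpa [wedge] using hPT hx (hsub (Ioo_subset_Icc_self hw)) hxu hw.1.le
  rw [show wedge (P u - P x) (P y - P u) = wedge (P u - P x) (P y) - wedge (P u - P x) (P u) by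
    simp only [wedge, Prod.fst_sub, Prod.snd_sub]; ring]
  convert key using 3 <;> ring

theorem wedge_mem_Icc_quartic {R P : ℝ → ℝ × ℝ}
    (hR : ∀ x ∈ J, HasDerivWithinAt R (P x) J x)
    (hP : ∀ ⦃x u y⦄, x ∈ J → y ∈ J → x ≤ u → u ≤ y → wedge (P u - P x) (P y - P u) ∈
      Icc (A * (((y - x) ^ 3 - (y - u) ^ 3 - (u - x) ^ 3) / 6))
        (B * (((y - x) ^ 3 - (y - u) ^ 3 - (u - x) ^ 3) / 6)))
    {s t : ℝ} (hs : s ∈ J) (ht : t ∈ J) (hst : s ≤ t) :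
    (t - s) * wedge (P t) (P s) + wedge (R t - R s) (P t - P s) ∈
      Icc (A * ((t - s) ^ 4 / 12)) (B * ((t - s) ^ 4 / 12)) := by
  have hsub : Icc s t ⊆ J := J.Icc_subset hs ht
  -- `f` is an antiderivative of `w ↦ (P w - P s) ∧ (P t - P w)`
  have key := sub_mem_Icc_of_hasDerivWithinAt (A := A) (B := B)
    (f := fun w => wedge (R w) (P t - P s) - w * wedge (P s) (P t))
    (p := fun w => ((t - s) ^ 3 * w + (t - w) ^ 4 / 4 - (w - s) ^ 4 / 4) / 6)
    (p' := fun w => ((t - s) ^ 3 - (t - w) ^ 3 - (w - s) ^ 3) / 6) hst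
    (fun w hw => (((hR w (hsub hw)).mono hsub).wedge (hasDerivWithinAt_const _ _ _)).sub
      ((hasDerivWithinAt_id w _).mul_const _))
    (fun w _ => by
      refine (((((hasDerivAt_id w).const_mul ((t - s) ^ 3)).add
        ((((hasDerivAt_id w).const_sub t).pow 4).div_const 4)).sub
        ((((hasDerivAt_id w).sub_const s).pow 4).div_const 4)).div_const 6).hasDerivWithinAt
        |>.congr_deriv ?_
      simp only [Nat.cast_ofNat, id_eq, Nat.add_one_sub_one, mul_one]; ring)
    fun w hw => by
      convert hP hs ht hw.1.le hw.2.le using 1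
      simp only [wedge, Prod.fst_sub, Prod.snd_sub, Prod.fst_zero, Prod.snd_zero]; ring
  rw [show (t - s) * wedge (P t) (P s) + wedge (R t - R s) (P t - P s) =
      wedge (R t) (P t - P s) - t * wedge (P s) (P t) -
        (wedge (R s) (P t - P s) - s * wedge (P s) (P t)) by
    simp only [wedge, Prod.fst_sub, Prod.snd_sub]; ring]
  convert key using 3 <;> ring

end

theorem IsPreconnected.mem_Icc_or_neg_mem_Icc {X : Type*} [TopologicalSpace X] {S : Set X}
    {f : X → ℝ} {A B : ℝ} (hS : IsPreconnected S) (hf : ContinuousOn f S) (hA : 0 < A)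
    (h : ∀ x ∈ S, |f x| ∈ Icc A B) : (∀ x ∈ S, f x ∈ Icc A B) ∨ ∀ x ∈ S, -f x ∈ Icc A B := by
  refine (hS.eq_or_eq_neg_of_sq_eq hf hf.abs (fun x _ => by simp [sq_abs])
    fun hx => (hA.trans_le (h _ hx).1).ne').imp (fun hfg x hx => ?_) fun hfg x hx => ?_
  · rw [hfg hx]; exact h x hx
  · rw [hfg hx, Pi.neg_apply, neg_neg]; exact h x hx

local notation "I" => Icc (1 / 2 : ℝ) 1

noncomputable def curveDeriv (k : ℕ) (φ3 φ4 : ℝ → ℝ) (t : ℝ) : ℝ × ℝ :=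
  (iDW k φ3 t, iDW k φ4 t)

noncomputable def mixedWronskian (φ3 φ4 : ℝ → ℝ) (x y : ℝ) : ℝ :=
  iDW 3 φ3 x * iDW 4 φ4 y - iDW 4 φ3 x * iDW 3 φ4 y

section

variable {φ φ3 φ4 : ℝ → ℝ} {n : WithTop ℕ∞} {k : ℕ}

theorem continuousOn_iDW (hφ : ContDiffOn ℝ n φ I) (hk : k ≤ n) : ContinuousOn (iDW k φ) I :=
  hφ.continuousOn_iteratedDerivWithin hk (uniqueDiffOn_Icc (by norm_num))

theorem hasDerivWithinAt_iDW (hφ : ContDiffOn ℝ n φ I) (hk : k < n) {x : ℝ} (hx : x ∈ I) :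
    HasDerivWithinAt (iDW k φ) (iDW (k + 1) φ x) I x := by
  rw [iDW, iteratedDerivWithin_succ]
  exact (hφ.differentiableOn_iteratedDerivWithin hk (uniqueDiffOn_Icc (by norm_num)) x hx
    ).hasDerivWithinAt

theorem hasDerivWithinAt_curveDeriv (h3 : ContDiffOn ℝ n φ3 I) (h4 : ContDiffOn ℝ n φ4 I)
    (hk : k < n) {x : ℝ} (hx : x ∈ I) :
    HasDerivWithinAt (curveDeriv k φ3 φ4) (curveDeriv (k + 1) φ3 φ4 x) I x :=
  (hasDerivWithinAt_iDW h3 hk hx).prodMk (hasDerivWithinAt_iDW h4 hk hx)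

theorem Dmat_eq_wedge (φ3 φ4 : ℝ → ℝ) (t s : ℝ) :
    Dmat φ3 φ4 t s = -2 * ((t - s) * wedge (curveDeriv 2 φ3 φ4 t) (curveDeriv 2 φ3 φ4 s) +
      wedge (curveDeriv 1 φ3 φ4 t - curveDeriv 1 φ3 φ4 s)
        (curveDeriv 2 φ3 φ4 t - curveDeriv 2 φ3 φ4 s)) := by
  rw [Dmat, Matrix.det_succ_row_zero]
  simp [Fin.sum_univ_succ, Matrix.det_fin_three, Fin.succAbove, wedge, curveDeriv]
  ring

theorem Dmat_comm (φ3 φ4 : ℝ → ℝ) (t s : ℝ) : Dmat φ3 φ4 t s = Dmat φ3 φ4 s t := by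
  simp only [Dmat_eq_wedge, wedge, curveDeriv, Prod.fst_sub, Prod.snd_sub]; ring

theorem Dmat_swap (φ3 φ4 : ℝ → ℝ) (t s : ℝ) : Dmat φ4 φ3 t s = -Dmat φ3 φ4 t s := by
  simp only [Dmat_eq_wedge, wedge, curveDeriv, Prod.fst_sub, Prod.snd_sub]; ring

theorem mixedWronskian_swap (φ3 φ4 : ℝ → ℝ) (x y : ℝ) :
    mixedWronskian φ4 φ3 x y = -mixedWronskian φ3 φ4 y x := by
  unfold mixedWronskian; ring

theorem abs_Dmat_mem_Icc {A B : ℝ} (hA : 0 ≤ A) (h3 : ContDiffOn ℝ 4 φ3 I)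
    (h4 : ContDiffOn ℝ 4 φ4 I) (hK : ∀ x ∈ I, ∀ y ∈ I, mixedWronskian φ3 φ4 x y ∈ Icc A B)
    {t s : ℝ} (ht : t ∈ I) (hs : s ∈ I) :
    |Dmat φ3 φ4 t s| ∈ Icc (A / 6 * (t - s) ^ 4) (B / 6 * (t - s) ^ 4) := by
  wlog hst : s ≤ t generalizing t s
  · rw [Dmat_comm, show (t - s) ^ 4 = (s - t) ^ 4 by ring]
    exact this hs ht (le_of_not_ge hst)
  have hγ (k : ℕ) (hk : k < 4) : ∀ x ∈ I,
      HasDerivWithinAt (curveDeriv k φ3 φ4) (curveDeriv (k + 1) φ3 φ4 x) I x :=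
    fun x hx => hasDerivWithinAt_curveDeriv h3 h4 (by exact_mod_cast hk) hx
  have hE := wedge_mem_Icc_quartic (hγ 1 (by norm_num))
    (wedge_sub_mem_Icc_cubic (hγ 2 (by norm_num))
      (wedge_sub_mem_Icc_quadratic (hγ 2 (by norm_num))
        (wedge_mem_Icc_linear (hγ 3 (by norm_num)) hK))) hs ht hst
  rw [Dmat_eq_wedge, abs_mul, abs_neg, abs_two,
    abs_of_nonneg ((mul_nonneg hA (by positivity)).trans hE.1)]
  constructor <;> linarith [hE.1, hE.2]

theorem Cond2.mixedWronskian_mem_Icc_or_neg {A2 A3 : ℝ} (hA2 : 0 < A2)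
    (h3 : ContDiffOn ℝ 4 φ3 I) (h4 : ContDiffOn ℝ 4 φ4 I) (hc : Cond2 A2 A3 φ3 φ4) :
    (∀ x ∈ I, ∀ y ∈ I, mixedWronskian φ3 φ4 x y ∈ Icc A2 A3) ∨
      ∀ x ∈ I, ∀ y ∈ I, -mixedWronskian φ3 φ4 x y ∈ Icc A2 A3 := by
  have hfst {φ : ℝ → ℝ} (hφ : ContDiffOn ℝ 4 φ I) (k : ℕ) (hk : k ≤ 4) :
      ContinuousOn (fun p : ℝ × ℝ => iDW k φ p.1) (I ×ˢ I) :=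
    (continuousOn_iDW hφ (by exact_mod_cast hk)).comp continuousOn_fst fun p hp => hp.1
  have hsnd {φ : ℝ → ℝ} (hφ : ContDiffOn ℝ 4 φ I) (k : ℕ) (hk : k ≤ 4) :
      ContinuousOn (fun p : ℝ × ℝ => iDW k φ p.2) (I ×ˢ I) :=
    (continuousOn_iDW hφ (by exact_mod_cast hk)).comp continuousOn_snd fun p hp => hp.2
  have hcont : ContinuousOn (fun p : ℝ × ℝ => mixedWronskian φ3 φ4 p.1 p.2) (I ×ˢ I) :=
    ((hfst h3 3 (by norm_num)).mul (hsnd h4 4 le_rfl)).sub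
      ((hfst h3 4 le_rfl).mul (hsnd h4 3 (by norm_num)))
  refine ((isPreconnected_Icc.prod isPreconnected_Icc).mem_Icc_or_neg_mem_Icc hcont hA2
    fun p hp => hc p.1 hp.1 p.2 hp.2).imp (fun h x hx y hy => h (x, y) ⟨hx, hy⟩)
    fun h x hx y hy => h (x, y) ⟨hx, hy⟩

end

/-- Lemma 18: the Jacobian determinant is comparable to `(t−s)⁴`. -/
theorem statement18 (A2 A3 : ℝ) (hA2 : 0 < A2) (hA3 : 0 < A3) :
    ∃ c : ℝ, 0 < c ∧ ∃ C : ℝ, 0 < C ∧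
      ∀ φ3 φ4 : ℝ → ℝ,
        ContDiffOn ℝ 4 φ3 (Icc (1/2 : ℝ) 1) → ContDiffOn ℝ 4 φ4 (Icc (1/2 : ℝ) 1) →
        Cond2 A2 A3 φ3 φ4 →
        ∀ t ∈ Icc (1/2 : ℝ) 1, ∀ s ∈ Icc (1/2 : ℝ) 1,
          c * (t - s) ^ 4 ≤ |Dmat φ3 φ4 t s| ∧ |Dmat φ3 φ4 t s| ≤ C * (t - s) ^ 4 := by
  refine ⟨A2 / 6, by positivity, A3 / 6, by positivity, fun φ3 φ4 h3 h4 hc t ht s hs => ?_⟩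
  rcases hc.mixedWronskian_mem_Icc_or_neg hA2 h3 h4 with hK | hK
  · exact abs_Dmat_mem_Icc hA2.le h3 h4 hK ht hs
  · rw [← abs_neg, ← Dmat_swap]
    refine abs_Dmat_mem_Icc hA2.le h4 h3 (fun x hx y hy => ?_) ht hs
    rw [mixedWronskian_swap]
    exact hK y hy x hx
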